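/- arXiv:2302.12627 — 4 statements merged into one kernel-verified Lean document; each statement's English description precedes it below -/
import Mathlib

section
/- Suppose Y = X θ⁰ + ε and |E| = 1 with X_K = (x_E, X_F) full rank, e being the index in E. Then σ T_{Y:E.F} = Δ₁ + Δ₂, where Δ₁ = √(1 − R²(x_E, X_F)) · θ⁰_e · ‖x_E‖₂ and Δ₂ = ‖Y − X_K θ⁰_K‖₂ · R(Y − X_K θ⁰_K, (I − P_F)x_E). -/
open Matrix

noncomputable def specNorm {m n : Type*} [Fintype m] [Fintype n] [DecidableEq n]
    (M : Matrix m n ℝ) : ℝ :=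
  ‖(Matrix.toEuclideanLin M).toContinuousLinearMap‖

noncomputable def proj {n : ℕ} {m : Type*} [Fintype m] [DecidableEq m]
    (X : Matrix (Fin n) m ℝ) : Matrix (Fin n) (Fin n) ℝ :=
  X * (Xᵀ * X)⁻¹ * Xᵀ

noncomputable def nrm {m : Type*} [Fintype m] (v : m → ℝ) : ℝ :=
  Real.sqrt (∑ i, (v i)^2)

/-!
Write `w = (I - P_F) x_E`. It lies in the column span of `X_K` and is orthogonal to that of `X_F`,
with `⟨w, x_E⟩ = ‖w‖²`; orthogonality of `w` to the least-squares residual `Y - X_K θ̂_K` then gives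
the Frisch–Waugh–Lovell formulas `θ̂_e = ⟨w, Y⟩ / ‖w‖²` and `((X_Kᵀ X_K)⁻¹)_ee = 1 / ‖w‖²`, so that
`σ T = ⟨w, Y⟩ / ‖w‖`. Substituting `Y = θ⁰_e x_E + X_F θ⁰_F + (Y - X_K θ⁰_K)` splits this into
`θ⁰_e ‖w‖ + ⟨Y - X_K θ⁰_K, w⟩ / ‖w‖`, and Pythagoras `‖x_E‖² = ‖P_F x_E‖² + ‖w‖²` turns `‖w‖`
into `√(1 - R²) ‖x_E‖`.
-/

open Function

section FullColumnRank

variable {k l m : Type*} [Fintype l] [Fintype m]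

theorem mulVec_injective_of_rank_eq_card (A : Matrix k m ℝ) (h : A.rank = Fintype.card m) :
    Injective A.mulVec := by
  rw [show A.mulVec = A.mulVecLin from rfl, ← LinearMap.ker_eq_bot,
    ← Submodule.finrank_eq_zero]
  have := LinearMap.finrank_range_add_finrank_ker A.mulVecLin
  rw [Module.finrank_fintype_fun_eq_card] at this
  unfold Matrix.rank at h
  omega

theorem mulVec_injective_of_fromCols {A : Matrix k l ℝ} {B : Matrix k m ℝ}
    (h : Injective (fromCols A B).mulVec) : Injective B.mulVec := fun u v huv => by
  have := h (a₁ := Sum.elim 0 u) (a₂ := Sum.elim 0 v) (by simp [huv])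
  exact funext fun j => by simpa using congrFun this (Sum.inr j)

theorem isUnit_det_transpose_mul_self [Fintype k] [DecidableEq m] {A : Matrix k m ℝ}
    (hA : Injective A.mulVec) : IsUnit (Aᵀ * A).det :=
  (isUnit_iff_isUnit_det _).mp <| by
    simpa [conjTranspose_eq_transpose_of_trivial] using (PosDef.conjTranspose_mul_self A hA).isUnit

end FullColumnRank

section Projection

variable {n : ℕ} {m : Type*} [Fintype m] [DecidableEq m] {X : Matrix (Fin n) m ℝ}

theorem proj_mulVec (X : Matrix (Fin n) m ℝ) (z : Fin n → ℝ) :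
    proj X *ᵥ z = X *ᵥ ((Xᵀ * X)⁻¹ *ᵥ (Xᵀ *ᵥ z)) := by
  simp only [proj, mulVec_mulVec, Matrix.mul_assoc]

theorem transpose_mulVec_one_sub_proj_mulVec (hX : Injective X.mulVec) (z : Fin n → ℝ) :
    Xᵀ *ᵥ ((1 - proj X) *ᵥ z) = 0 := by
  rw [sub_mulVec, one_mulVec, mulVec_sub, proj_mulVec, mulVec_mulVec, mulVec_mulVec,
    Matrix.mul_nonsing_inv _ (isUnit_det_transpose_mul_self hX), one_mulVec, sub_self]

theorem one_sub_proj_mulVec_dotProduct_mulVec (hX : Injective X.mulVec) (z : Fin n → ℝ)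
    (v : m → ℝ) : ((1 - proj X) *ᵥ z) ⬝ᵥ (X *ᵥ v) = 0 := by
  rw [dotProduct_mulVec, ← mulVec_transpose, transpose_mulVec_one_sub_proj_mulVec hX,
    zero_dotProduct]

theorem proj_mulVec_add_one_sub_proj_mulVec (X : Matrix (Fin n) m ℝ) (z : Fin n → ℝ) :
    proj X *ᵥ z + (1 - proj X) *ᵥ z = z := by
  rw [sub_mulVec, one_mulVec, add_sub_cancel]

theorem one_sub_proj_mulVec_dotProduct_proj_mulVec (hX : Injective X.mulVec)
    (y z : Fin n → ℝ) : ((1 - proj X) *ᵥ y) ⬝ᵥ (proj X *ᵥ z) = 0 := by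
  rw [proj_mulVec, one_sub_proj_mulVec_dotProduct_mulVec hX]

theorem one_sub_proj_mulVec_dotProduct_self (hX : Injective X.mulVec) (z : Fin n → ℝ) :
    ((1 - proj X) *ᵥ z) ⬝ᵥ z = ((1 - proj X) *ᵥ z) ⬝ᵥ ((1 - proj X) *ᵥ z) := by
  conv_lhs => arg 2; rw [← proj_mulVec_add_one_sub_proj_mulVec X z]
  rw [dotProduct_add, one_sub_proj_mulVec_dotProduct_proj_mulVec hX, zero_add]

theorem dotProduct_self_eq_proj_add_one_sub_proj (hX : Injective X.mulVec) (z : Fin n → ℝ) :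
    z ⬝ᵥ z = (proj X *ᵥ z) ⬝ᵥ (proj X *ᵥ z) + ((1 - proj X) *ᵥ z) ⬝ᵥ ((1 - proj X) *ᵥ z) := by
  conv_lhs => rw [← proj_mulVec_add_one_sub_proj_mulVec X z]
  rw [add_dotProduct, dotProduct_add, dotProduct_add,
    dotProduct_comm (proj X *ᵥ z) ((1 - proj X) *ᵥ z),
    one_sub_proj_mulVec_dotProduct_proj_mulVec hX, add_zero, zero_add]

end Projection

section FrischWaughLovell

variable {n : ℕ} {m : Type*}

theorem fromCols_replicateCol_mulVec_sumElim [Fintype m] (x : Fin n → ℝ) (X : Matrix (Fin n) m ℝ)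
    (u : Fin 1 → ℝ) (v : m → ℝ) :
    fromCols (replicateCol (Fin 1) x) X *ᵥ Sum.elim u v = u 0 • x + X *ᵥ v := by
  rw [fromCols_mulVec_sumElim]
  congr 1
  ext i
  simp [mulVec, dotProduct, mul_comm]

theorem transpose_fromCols_replicateCol_mulVec (x : Fin n → ℝ) (X : Matrix (Fin n) m ℝ)
    (z : Fin n → ℝ) :
    (fromCols (replicateCol (Fin 1) x) X)ᵀ *ᵥ z = Sum.elim (fun _ => x ⬝ᵥ z) (Xᵀ *ᵥ z) := by
  rw [transpose_fromCols, fromRows_mulVec]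
  congr 1

variable [Fintype m] [DecidableEq m] {x : Fin n → ℝ} {X : Matrix (Fin n) m ℝ}

theorem one_sub_proj_mulVec_eq_fromCols_mulVec (x : Fin n → ℝ) (X : Matrix (Fin n) m ℝ) :
    (1 - proj X) *ᵥ x = fromCols (replicateCol (Fin 1) x) X *ᵥ
      Sum.elim 1 (-((Xᵀ * X)⁻¹ *ᵥ (Xᵀ *ᵥ x))) := by
  rw [fromCols_replicateCol_mulVec_sumElim, sub_mulVec, one_mulVec, proj_mulVec, mulVec_neg,
    Pi.one_apply, one_smul, sub_eq_add_neg]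

theorem one_sub_proj_mulVec_ne_zero
    (hK : Injective (fromCols (replicateCol (Fin 1) x) X).mulVec) :
    (1 - proj X) *ᵥ x ≠ 0 := fun h => by
  rw [one_sub_proj_mulVec_eq_fromCols_mulVec,
    ← mulVec_zero (fromCols (replicateCol (Fin 1) x) X)] at h
  simpa using congrFun (hK h) (Sum.inl 0)

theorem one_sub_proj_mulVec_dotProduct_smul_add_mulVec (hX : Injective X.mulVec) (c : ℝ)
    (v : m → ℝ) :
    ((1 - proj X) *ᵥ x) ⬝ᵥ (c • x + X *ᵥ v) =
      c * (((1 - proj X) *ᵥ x) ⬝ᵥ ((1 - proj X) *ᵥ x)) := by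
  rw [dotProduct_add, dotProduct_smul, one_sub_proj_mulVec_dotProduct_mulVec hX,
    one_sub_proj_mulVec_dotProduct_self hX, smul_eq_mul, add_zero]

theorem inv_gram_mulVec_transpose_mulVec_inl
    (hK : Injective (fromCols (replicateCol (Fin 1) x) X).mulVec) (hX : Injective X.mulVec)
    (z : Fin n → ℝ) :
    let XK := fromCols (replicateCol (Fin 1) x) X
    let w := (1 - proj X) *ᵥ x
    ((XKᵀ * XK)⁻¹ *ᵥ (XKᵀ *ᵥ z)) (Sum.inl 0) = (w ⬝ᵥ z) / (w ⬝ᵥ w) := by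
  intro XK w
  set u := (XKᵀ * XK)⁻¹ *ᵥ (XKᵀ *ᵥ z)
  have hw : w ⬝ᵥ w ≠ 0 :=
    (dotProduct_self_eq_zero (v := w)).not.mpr (one_sub_proj_mulVec_ne_zero hK)
  have hfit : XK *ᵥ u = u (Sum.inl 0) • x + X *ᵥ (u ∘ Sum.inr) := by
    rw [← Sum.elim_comp_inl_inr u, fromCols_replicateCol_mulVec_sumElim]
    rfl
  have hnormal : w ⬝ᵥ (z - XK *ᵥ u) = 0 := by
    rw [show z - XK *ᵥ u = (1 - proj XK) *ᵥ z by rw [sub_mulVec, one_mulVec, proj_mulVec],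
      dotProduct_comm, show w = XK *ᵥ _ from one_sub_proj_mulVec_eq_fromCols_mulVec x X,
      one_sub_proj_mulVec_dotProduct_mulVec hK]
  rw [dotProduct_sub, hfit, one_sub_proj_mulVec_dotProduct_smul_add_mulVec hX,
    sub_eq_zero] at hnormal
  rw [hnormal, mul_div_cancel_right₀ _ hw]

theorem inv_gram_inl_inl (hK : Injective (fromCols (replicateCol (Fin 1) x) X).mulVec)
    (hX : Injective X.mulVec) :
    let XK := fromCols (replicateCol (Fin 1) x) X
    let w := (1 - proj X) *ᵥ x
    (XKᵀ * XK)⁻¹ (Sum.inl 0) (Sum.inl 0) = (w ⬝ᵥ w)⁻¹ := by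
  intro XK w
  have hw : w ⬝ᵥ w ≠ 0 :=
    (dotProduct_self_eq_zero (v := w)).not.mpr (one_sub_proj_mulVec_ne_zero hK)
  -- `XKᵀ w = ‖w‖² e_e`, so the `(e, e)` entry is the coefficient fitted to `z = w / ‖w‖²`.
  have hsingle : XKᵀ *ᵥ ((w ⬝ᵥ w)⁻¹ • w) = Pi.single (Sum.inl 0) 1 := by
    rw [mulVec_smul, transpose_fromCols_replicateCol_mulVec,
      transpose_mulVec_one_sub_proj_mulVec hX]
    ext (j | j)
    · have hxw : x ⬝ᵥ w = w ⬝ᵥ w :=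
        (dotProduct_comm _ _).trans (one_sub_proj_mulVec_dotProduct_self hX x)
      simp [Subsingleton.elim j 0, hxw, hw]
    · simp
  have hcoef : ((XKᵀ * XK)⁻¹ *ᵥ (XKᵀ *ᵥ ((w ⬝ᵥ w)⁻¹ • w))) (Sum.inl 0) =
      (w ⬝ᵥ (w ⬝ᵥ w)⁻¹ • w) / (w ⬝ᵥ w) := inv_gram_mulVec_transpose_mulVec_inl hK hX _
  rwa [hsingle, mulVec_single_one, dotProduct_smul, smul_eq_mul, mul_div_cancel_right₀ _ hw]
    at hcoef

end FrischWaughLovell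

section Norm

variable {ι : Type*} [Fintype ι]

theorem nrm_eq_sqrt_dotProduct (v : ι → ℝ) : nrm v = √(v ⬝ᵥ v) := by
  simp only [nrm, dotProduct, sq]

theorem dotProduct_self_nonneg (v : ι → ℝ) : 0 ≤ v ⬝ᵥ v := by
  simpa using dotProduct_self_star_nonneg v

theorem sq_nrm (v : ι → ℝ) : nrm v ^ 2 = v ⬝ᵥ v := by
  rw [nrm_eq_sqrt_dotProduct, Real.sq_sqrt (dotProduct_self_nonneg v)]

theorem nrm_pos {v : ι → ℝ} (hv : v ≠ 0) : 0 < nrm v := by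
  rw [nrm_eq_sqrt_dotProduct, Real.sqrt_pos]
  exact (dotProduct_self_nonneg v).lt_of_ne' (dotProduct_self_eq_zero.not.mpr hv)

theorem sqrt_one_sub_sq_nrm_div_mul_nrm {x p w : ι → ℝ} (h : x ⬝ᵥ x = p ⬝ᵥ p + w ⬝ᵥ w) :
    √(1 - (nrm p / nrm x) ^ 2) * nrm x = nrm w := by
  have hp := dotProduct_self_nonneg p
  have hw := dotProduct_self_nonneg w
  rcases eq_or_ne (x ⬝ᵥ x) 0 with hx | hx
  · have hw0 : w ⬝ᵥ w = 0 := by linarith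
    simp [nrm_eq_sqrt_dotProduct, hx, hw0]
  have hcos : 1 - (nrm p / nrm x) ^ 2 = (w ⬝ᵥ w) / (x ⬝ᵥ x) := by
    rw [div_pow, sq_nrm, sq_nrm]
    field_simp
    linarith
  rw [hcos, nrm_eq_sqrt_dotProduct x, nrm_eq_sqrt_dotProduct w,
    ← Real.sqrt_mul (div_nonneg hw (dotProduct_self_nonneg x)), div_mul_cancel₀ _ hx]

theorem nrm_mul_div_nrm_mul (r w : ι → ℝ) (c : ℝ) :
    nrm r * ((r ⬝ᵥ w) / (nrm r * c)) = (r ⬝ᵥ w) / c := by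
  rcases eq_or_ne r 0 with rfl | hr
  · simp
  · rw [← mul_div_assoc, mul_div_mul_left _ _ (nrm_pos hr).ne']

end Norm

theorem stmt_7_general {n b : ℕ} (xE : Fin n → ℝ) (XF : Matrix (Fin n) (Fin b) ℝ)
    (Y : Fin n → ℝ) (θ0e : ℝ) (θ0F : Fin b → ℝ) (σ : ℝ) (hσ : 0 < σ)
    (hrank : (Matrix.fromCols (Matrix.of fun i (_ : Fin 1) => xE i) XF).rank = 1 + b) :
    let XK := Matrix.fromCols (Matrix.of fun i (_ : Fin 1) => xE i) XF
    let θK := (XKᵀ * XK)⁻¹ *ᵥ (XKᵀ *ᵥ Y)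
    let T := σ⁻¹ * θK (Sum.inl 0) / Real.sqrt (((XKᵀ * XK)⁻¹) (Sum.inl 0) (Sum.inl 0))
    let w := (1 - proj XF) *ᵥ xE
    let resid := Y - (θ0e • xE + XF *ᵥ θ0F)
    let R := nrm (proj XF *ᵥ xE) / nrm xE
    σ * T = Real.sqrt (1 - R^2) * θ0e * nrm xE
        + nrm resid * ((resid ⬝ᵥ w) / (nrm resid * nrm w)) := by
  intro XK θK T w resid R
  have hK : Injective XK.mulVec :=
    mulVec_injective_of_rank_eq_card XK (by simpa [add_comm] using hrank)
  have hF : Injective XF.mulVec := mulVec_injective_of_fromCols hK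
  have hθ : θK (Sum.inl 0) = (w ⬝ᵥ Y) / (w ⬝ᵥ w) :=
    inv_gram_mulVec_transpose_mulVec_inl hK hF Y
  have hG : (XKᵀ * XK)⁻¹ (Sum.inl 0) (Sum.inl 0) = (w ⬝ᵥ w)⁻¹ := inv_gram_inl_inl hK hF
  have hΔ₁ : √(1 - R ^ 2) * nrm xE = nrm w :=
    sqrt_one_sub_sq_nrm_div_mul_nrm (dotProduct_self_eq_proj_add_one_sub_proj hF xE)
  have hwY : w ⬝ᵥ Y = θ0e * (w ⬝ᵥ w) + resid ⬝ᵥ w := by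
    rw [← sub_add_cancel Y (θ0e • xE + XF *ᵥ θ0F), dotProduct_add,
      one_sub_proj_mulVec_dotProduct_smul_add_mulVec hF, dotProduct_comm, add_comm]
  have hw : 0 < nrm w := nrm_pos (one_sub_proj_mulVec_ne_zero hK)
  show σ * (σ⁻¹ * θK (Sum.inl 0) / √((XKᵀ * XK)⁻¹ (Sum.inl 0) (Sum.inl 0))) = _
  rw [hθ, hG, mul_comm _ θ0e, mul_assoc, hΔ₁, nrm_mul_div_nrm_mul, hwY, ← sq_nrm w,
    Real.sqrt_inv, Real.sqrt_sq hw.le]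
  field_simp

/-- Signal/noise decomposition of the Wald statistic for a single covariate:
σT = Δ₁ + Δ₂. -/
theorem stmt_7 {n b : ℕ} (xE : Fin n → ℝ) (XF : Matrix (Fin n) (Fin b) ℝ)
    (Y : Fin n → ℝ) (θ0e : ℝ) (θ0F : Fin b → ℝ) (σ : ℝ) (hσ : 0 < σ)
    (hrank : (Matrix.fromCols (Matrix.of fun i (_ : Fin 1) => xE i) XF).rank = 1 + b)
    (hw : (1 - proj XF) *ᵥ xE ≠ 0)
    (hres : Y - (θ0e • xE + XF *ᵥ θ0F) ≠ 0) :
    let XK := Matrix.fromCols (Matrix.of fun i (_ : Fin 1) => xE i) XF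
    let θK := (XKᵀ * XK)⁻¹ *ᵥ (XKᵀ *ᵥ Y)
    let T := σ⁻¹ * θK (Sum.inl 0) / Real.sqrt (((XKᵀ * XK)⁻¹) (Sum.inl 0) (Sum.inl 0))
    let w := (1 - proj XF) *ᵥ xE
    let resid := Y - (θ0e • xE + XF *ᵥ θ0F)
    let R := nrm (proj XF *ᵥ xE) / nrm xE
    σ * T = Real.sqrt (1 - R^2) * θ0e * nrm xE
        + nrm resid * ((resid ⬝ᵥ w) / (nrm resid * nrm w)) :=
  stmt_7_general xE XF Y θ0e θ0F σ hσ hrank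
end

section
/- Let Y, X_E, X_F have centred columns with (X_E, X_F) full rank, and let T_{(I−P_F)Y:E} be the known-σ Wald statistic vector from regressing (I − P_F)Y on X_E. Then ‖T_{(I−P_F)Y:E}‖_∞ ≤ σ⁻¹ ‖Y‖₂ { R(Y, X_E) + R(X_E, X_F) }, where R(Y, X_E) = ‖P_E Y‖₂/‖Y‖₂ is the sample multiple correlation of Y with X_E and R(X_E, X_F) = ‖P_E P_F‖₂. -/
open Matrix

/-!
Write `A = (X_Eᵀ X_E)⁻¹` and `u = X_E A e_j`. The identity `A (X_Eᵀ X_E) A = A`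
(true also for singular `X_Eᵀ X_E`, where `A = 0`) turns the `j`-th
least-squares coefficient of `Ỹ = (I - P_F) Y` into `⟪u, P_E Ỹ⟫` and gives `‖u‖² = A_jj`, so by
Cauchy–Schwarz the `j`-th Wald statistic is at most `σ⁻¹ ‖P_E Ỹ‖`. Since
`P_E Ỹ = P_E Y - P_E P_F Y`, the triangle inequality and the operator norm of `P_E P_F` finish.
-/

section EuclideanNorm

variable {m k : Type*} [Fintype m]

lemma nrm_eq_norm (v : m → ℝ) : nrm v = ‖WithLp.toLp 2 v‖ := by
  simp [nrm, EuclideanSpace.norm_eq]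

lemma nrm_eq_sqrt_dotProduct_self (v : m → ℝ) : nrm v = √(v ⬝ᵥ v) := by
  simp [nrm, dotProduct, sq]

lemma nrm_eq_zero {v : m → ℝ} : nrm v = 0 ↔ v = 0 := by
  rw [nrm_eq_norm, norm_eq_zero, WithLp.toLp_eq_zero]

lemma nrm_sub_le (u v : m → ℝ) : nrm (u - v) ≤ nrm u + nrm v := by
  simpa only [nrm_eq_norm, WithLp.toLp_sub] using norm_sub_le _ _

lemma abs_dotProduct_le_nrm_mul_nrm (u v : m → ℝ) : |u ⬝ᵥ v| ≤ nrm u * nrm v := by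
  simpa [nrm_eq_norm, EuclideanSpace.inner_toLp_toLp, dotProduct_comm] using
    abs_real_inner_le_norm (WithLp.toLp 2 u) (WithLp.toLp 2 v)

lemma nrm_mulVec_le [Fintype k] [DecidableEq k] (M : Matrix m k ℝ) (v : k → ℝ) :
    nrm (M *ᵥ v) ≤ specNorm M * nrm v := by
  simpa [nrm_eq_norm, specNorm] using
    (toEuclideanLin M).toContinuousLinearMap.le_opNorm (WithLp.toLp 2 v)

end EuclideanNorm

lemma nonsing_inv_mul_mul_nonsing_inv {n R : Type*} [Fintype n] [DecidableEq n] [CommRing R]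
    (A : Matrix n n R) : A⁻¹ * A * A⁻¹ = A⁻¹ := by
  by_cases h : IsUnit A.det
  · rw [nonsing_inv_mul A h, one_mul]
  · rw [nonsing_inv_apply_not_isUnit A h, zero_mul, zero_mul]

section Gram

variable {k m R : Type*} [Fintype k] [Fintype m] [CommRing R]

lemma mulVec_dotProduct_mulVec (X : Matrix k m R) (p q : m → R) :
    (X *ᵥ p) ⬝ᵥ (X *ᵥ q) = p ⬝ᵥ ((Xᵀ * X) *ᵥ q) := by
  rw [← mulVec_mulVec, dotProduct_mulVec p, vecMul_transpose, dotProduct_mulVec]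

lemma mulVec_gram_inv_dotProduct [DecidableEq m] (X : Matrix k m R) (p q : m → R) :
    (X *ᵥ ((Xᵀ * X)⁻¹ *ᵥ p)) ⬝ᵥ (X *ᵥ ((Xᵀ * X)⁻¹ *ᵥ q)) = p ⬝ᵥ ((Xᵀ * X)⁻¹ *ᵥ q) := by
  have hsymm : ((Xᵀ * X)⁻¹)ᵀ = (Xᵀ * X)⁻¹ := by
    rw [transpose_nonsing_inv, transpose_mul, transpose_transpose]
  rw [mulVec_dotProduct_mulVec, ← vecMul_transpose (Xᵀ * X)⁻¹ p, ← dotProduct_mulVec, hsymm,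
    mulVec_mulVec, mulVec_mulVec, nonsing_inv_mul_mul_nonsing_inv]

end Gram

lemma abs_olsCoef_div_sqrt_le_nrm_proj {n : ℕ} {m : Type*} [Fintype m] [DecidableEq m]
    (X : Matrix (Fin n) m ℝ) (z : Fin n → ℝ) (j : m) :
    |((Xᵀ * X)⁻¹ *ᵥ (Xᵀ *ᵥ z)) j| / √((Xᵀ * X)⁻¹ j j) ≤ nrm (proj X *ᵥ z) := by
  set A := (Xᵀ * X)⁻¹
  set u := X *ᵥ (A *ᵥ Pi.single j 1)
  have hcoef : (A *ᵥ (Xᵀ *ᵥ z)) j = u ⬝ᵥ (proj X *ᵥ z) := by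
    have hproj : proj X *ᵥ z = X *ᵥ (A *ᵥ (Xᵀ *ᵥ z)) := by
      simp only [proj, A, mulVec_mulVec, Matrix.mul_assoc]
    rw [hproj, mulVec_gram_inv_dotProduct, single_one_dotProduct]
  have hu : nrm u = √(A j j) := by
    rw [nrm_eq_sqrt_dotProduct_self, mulVec_gram_inv_dotProduct, single_one_dotProduct,
      mulVec_single_one]
    rfl
  refine div_le_of_le_mul₀ (Real.sqrt_nonneg _) (Real.sqrt_nonneg _) ?_
  rw [hcoef, ← hu, mul_comm]
  exact abs_dotProduct_le_nrm_mul_nrm _ _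

theorem stmt_10_general {n a b : ℕ} (XE : Matrix (Fin n) (Fin a) ℝ) (XF : Matrix (Fin n) (Fin b) ℝ)
    (Y : Fin n → ℝ) (σ : ℝ) (hσ : 0 < σ) :
    let Ytil := (1 - proj XF) *ᵥ Y
    let θ := (XEᵀ * XE)⁻¹ *ᵥ (XEᵀ *ᵥ Ytil)
    let T := fun j => σ⁻¹ * θ j / Real.sqrt (((XEᵀ * XE)⁻¹) j j)
    ∀ j, |T j| ≤ σ⁻¹ * nrm Y *
        (nrm (proj XE *ᵥ Y) / nrm Y + specNorm (proj XE * proj XF)) := by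
  intro Ytil θ T j
  have hprojYtil : proj XE *ᵥ Ytil = proj XE *ᵥ Y - (proj XE * proj XF) *ᵥ Y := by
    simp only [Ytil, sub_mulVec, one_mulVec, mulVec_sub, mulVec_mulVec]
  have hcancel : nrm Y * (nrm (proj XE *ᵥ Y) / nrm Y) = nrm (proj XE *ᵥ Y) :=
    mul_div_cancel_of_imp' fun h => by rw [nrm_eq_zero.mp h, mulVec_zero, nrm_eq_zero]
  calc |T j| = σ⁻¹ * (|θ j| / √((XEᵀ * XE)⁻¹ j j)) := by
        rw [abs_div, abs_mul, abs_of_pos (inv_pos.mpr hσ), abs_of_nonneg (Real.sqrt_nonneg _),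
          mul_div_assoc]
    _ ≤ σ⁻¹ * nrm (proj XE *ᵥ Ytil) := by
        gcongr
        exact abs_olsCoef_div_sqrt_le_nrm_proj XE Ytil j
    _ ≤ σ⁻¹ * (nrm (proj XE *ᵥ Y) + specNorm (proj XE * proj XF) * nrm Y) := by
        gcongr
        rw [hprojYtil]
        exact (nrm_sub_le _ _).trans (add_le_add le_rfl (nrm_mulVec_le _ _))
    _ = σ⁻¹ * nrm Y * (nrm (proj XE *ᵥ Y) / nrm Y + specNorm (proj XE * proj XF)) := by
        rw [mul_assoc σ⁻¹ (nrm Y), mul_add (nrm Y), hcancel]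
        ring

/-- Sup-norm bound on the Wald statistic vector from regressing (I − P_F)Y on X_E. -/
theorem stmt_10 {n a b : ℕ} (XE : Matrix (Fin n) (Fin a) ℝ) (XF : Matrix (Fin n) (Fin b) ℝ)
    (Y : Fin n → ℝ) (σ : ℝ) (hσ : 0 < σ) (hY : Y ≠ 0)
    (hcY : ∑ i, Y i = 0) (hcE : ∀ j, ∑ i, XE i j = 0) (hcF : ∀ j, ∑ i, XF i j = 0)
    (hrank : (Matrix.fromCols XE XF).rank = a + b) :
    let Ytil := (1 - proj XF) *ᵥ Y
    let θ := (XEᵀ * XE)⁻¹ *ᵥ (XEᵀ *ᵥ Ytil)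
    let T := fun j => σ⁻¹ * θ j / Real.sqrt (((XEᵀ * XE)⁻¹) j j)
    ∀ j, |T j| ≤ σ⁻¹ * nrm Y *
        (nrm (proj XE *ᵥ Y) / nrm Y + specNorm (proj XE * proj XF)) :=
  stmt_10_general XE XF Y σ hσ
end

section
/- Let Σ ∈ ℝ^{r̂×r̂} be symmetric positive definite, let Σ_mm be its leading principal r_m × r_m block, and define Γ = I − Σ^{1/2} [ (Σ_mm⁻¹, 0); (0, 0) ] Σ^{1/2}. Then Γ is symmetric positive semi-definite with eigenvalues consisting of exactly r_m zeroes and r̂ − r_m ones; in particular Γ is an orthogonal projection of rank r̂ − r_m. -/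
/-! With `Q = Σ^{1/2}` and `B = diag(Σ_mm⁻¹, 0)` one has `B Σ B = B`, so `Q B Q` is a symmetric
idempotent, and so is `Γ = 1 - Q B Q`; a symmetric idempotent equals `Γᵀ Γ` and is therefore
positive semidefinite. The rank of an idempotent is its trace, and
`tr (Q B Q) = tr (Σ B) = tr (Σ_mm Σ_mm⁻¹) = r_m`. -/

open Matrix

/-- The positive semidefinite square root of a positive semidefinite matrix
(the definition removed from Mathlib, restored with its old value). -/
noncomputable def Matrix.PosSemidef.sqrt {n 𝕜 : Type*} [Fintype n] [DecidableEq n] [RCLike 𝕜]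
    [PartialOrder 𝕜] [StarOrderedRing 𝕜] {A : Matrix n n 𝕜} (hA : A.PosSemidef) : Matrix n n 𝕜 :=
  hA.1.eigenvectorUnitary.1 * diagonal ((↑) ∘ (√·) ∘ hA.1.eigenvalues) *
    (star hA.1.eigenvectorUnitary : Matrix n n 𝕜)

theorem IsSelfAdjoint.isStarProjection_mul_mul {R : Type*} [Semiring R] [StarRing R] {Q B : R}
    (hQ : IsSelfAdjoint Q) (hB : IsSelfAdjoint B) (h : B * (Q * Q) * B = B) :
    IsStarProjection (Q * B * Q) where
  isIdempotentElem := by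
    rw [IsIdempotentElem, show Q * B * Q * (Q * B * Q) = Q * (B * (Q * Q) * B) * Q by
      simp only [mul_assoc], h]
  isSelfAdjoint := by
    simp only [IsSelfAdjoint, star_mul, hQ.star_eq, hB.star_eq, mul_assoc]

namespace Matrix

section Sqrt

variable {n : Type*} [Fintype n] [DecidableEq n] {A : Matrix n n ℝ}

theorem PosSemidef.sqrt_mul_sqrt (hA : A.PosSemidef) : hA.sqrt * hA.sqrt = A := by
  have hU : (star hA.1.eigenvectorUnitary : Matrix n n ℝ) * hA.1.eigenvectorUnitary.1 = 1 :=
    Unitary.coe_star_mul_self _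
  conv_rhs => rw [hA.1.spectral_theorem, Unitary.conjStarAlgAut_apply]
  simp only [PosSemidef.sqrt, Matrix.mul_assoc]
  rw [← Matrix.mul_assoc (star _ : Matrix n n ℝ), hU, Matrix.one_mul,
    ← Matrix.mul_assoc (diagonal _), diagonal_mul_diagonal]
  congr 3
  funext i
  simp [Real.mul_self_sqrt (hA.eigenvalues_nonneg i)]

theorem PosSemidef.isHermitian_sqrt (hA : A.PosSemidef) : hA.sqrt.IsHermitian := by
  simp only [IsHermitian, PosSemidef.sqrt, star_eq_conjTranspose, conjTranspose_mul,
    conjTranspose_conjTranspose, Matrix.mul_assoc, diagonal_conjTranspose]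
  congr 2

end Sqrt

theorem posSemidef_of_isStarProjection {n R : Type*} [Fintype n] [CommRing R] [PartialOrder R]
    [StarRing R] [StarOrderedRing R] {P : Matrix n n R} (hP : IsStarProjection P) :
    P.PosSemidef := by
  have h := posSemidef_conjTranspose_mul_self P
  rwa [← star_eq_conjTranspose, hP.isSelfAdjoint.star_eq, hP.isIdempotentElem.eq] at h

theorem rank_eq_trace_of_isIdempotentElem {n K : Type*} [Fintype n] [DecidableEq n] [Field K]
    {P : Matrix n n K} (hP : IsIdempotentElem P) : (P.rank : K) = P.trace := by
  have hP' : IsIdempotentElem (toLin' P) := by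
    rw [IsIdempotentElem, Module.End.mul_eq_comp, ← toLin'_mul, hP.eq]
  rw [← trace_toLin'_eq, (LinearMap.IsIdempotentElem.isProj_range _ hP').trace, rank]
  rfl

variable {m n α : Type*} [Fintype m] [DecidableEq m] [Fintype n] [CommRing α]

theorem fromBlocks_toBlocks₁₁_inv_mul_mul_self (S : Matrix (m ⊕ n) (m ⊕ n) α)
    (hS : IsUnit S.toBlocks₁₁.det) :
    fromBlocks S.toBlocks₁₁⁻¹ 0 0 0 * S * fromBlocks S.toBlocks₁₁⁻¹ 0 0 0 =
      fromBlocks S.toBlocks₁₁⁻¹ 0 0 0 := by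
  conv_lhs => rw [← fromBlocks_toBlocks S]
  simp [fromBlocks_multiply, nonsing_inv_mul _ hS]

theorem trace_mul_fromBlocks_toBlocks₁₁_inv (S : Matrix (m ⊕ n) (m ⊕ n) α)
    (hS : IsUnit S.toBlocks₁₁.det) :
    trace (S * fromBlocks S.toBlocks₁₁⁻¹ 0 0 0) = (Fintype.card m : α) := by
  conv_lhs => rw [← fromBlocks_toBlocks S]
  simp [fromBlocks_multiply, mul_nonsing_inv _ hS, trace, Fintype.sum_sum_type]

end Matrix

/-- Γ = I − Σ^{1/2} diag(Σ_mm⁻¹, 0) Σ^{1/2} is an orthogonal projection of rank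
r̂ − r_m (eigenvalues: r_m zeroes and r̂ − r_m ones). -/
theorem stmt_15 {rm s : ℕ}
    (Sg : Matrix (Fin rm ⊕ Fin s) (Fin rm ⊕ Fin s) ℝ) (hSg : Sg.PosDef) :
    let Smm := Sg.toBlocks₁₁
    let B := Matrix.fromBlocks Smm⁻¹ 0 0 0
    let sq := hSg.posSemidef.sqrt
    let Γ := 1 - sq * B * sq
    Γ.PosSemidef ∧ Γ * Γ = Γ ∧ Γ.rank = s := by
  intro Smm B sq Γ
  have hSmm : Smm.PosDef := hSg.submatrix Sum.inl_injective
  have hSmm_det : IsUnit Smm.det := hSmm.det_pos.ne'.isUnit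
  have hB : IsSelfAdjoint B := by
    rw [IsSelfAdjoint, star_eq_conjTranspose, fromBlocks_conjTranspose, hSmm.isHermitian.inv.eq]
    simp [B]
  have hP : IsStarProjection (sq * B * sq) := by
    refine hSg.posSemidef.isHermitian_sqrt.isSelfAdjoint.isStarProjection_mul_mul hB ?_
    rw [hSg.posSemidef.sqrt_mul_sqrt]
    exact fromBlocks_toBlocks₁₁_inv_mul_mul_self Sg hSmm_det
  have hΓ : IsStarProjection Γ := hP.one_sub
  refine ⟨posSemidef_of_isStarProjection hΓ, hΓ.isIdempotentElem.eq, ?_⟩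
  have htrace : (Γ.rank : ℝ) = s := by
    rw [rank_eq_trace_of_isIdempotentElem hΓ.isIdempotentElem, trace_sub, trace_one,
      trace_mul_cycle, hSg.posSemidef.sqrt_mul_sqrt,
      trace_mul_fromBlocks_toBlocks₁₁_inv Sg hSmm_det]
    simp
  exact_mod_cast htrace
end

section
/- Let P_F and P_{E∖{e}} be orthogonal projections with ‖P_F P_{E∖{e}}‖₂ < 1, and let Δ_e = (I − P_{E∖{e}}) Σ_{m≥1}(P_F P_{E∖{e}})^m P_F − P_{E∖{e}} P_F. Then the matrix (P_F + Δ_e)(I − P_{E∖{e}}) is an orthogonal projection matrix. -/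
open Matrix

/-!
The series `t = P + Σ_{m ≥ 1} (P Q)^m P` is `(1 - P Q)⁻¹ P`, and `P + Δ = (1 - Q) t`, so the
matrix is `(1 - Q) t (1 - Q)`. From `(1 - P Q) t = P` one gets `P t = t`, hence
`(1 - P Q) t (1 - Q) t = P (1 - Q) t = (1 - P Q) t`, i.e. `t (1 - Q) t = t`; and `t` is symmetric
because also `t (1 - Q P) = P`. Compressing a symmetric `t` with `t (1 - Q) t = t` by the
projection `1 - Q` gives a projection.
-/

section GeomSeries

variable {R : Type*} [NormedRing R] [HasSummableGeomSeries R]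

theorem one_sub_mul_tsum_pow_mul {x : R} (hx : ‖x‖ < 1) (p : R) :
    (1 - x) * ∑' m, x ^ m * p = p := by
  rw [(summable_geometric_of_norm_lt_one hx).tsum_mul_right, ← mul_assoc,
    mul_neg_geom_series x hx, one_mul]

theorem add_tsum_pow_succ_mul {x : R} (hx : ‖x‖ < 1) (p : R) :
    p + ∑' m, x ^ (m + 1) * p = ∑' m, x ^ m * p := by
  rw [((summable_geometric_of_norm_lt_one hx).mul_right p).tsum_eq_zero_add, pow_zero, one_mul]

end GeomSeries

section Compression

variable {R : Type*} [Ring R] {p q t : R}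

theorem mul_eq_self_of_one_sub_mul_mul_eq (hp : IsIdempotentElem p)
    (ht : (1 - p * q) * t = p) : p * t = t := by
  have ht' : t = p + p * q * t :=
    calc t = (1 - p * q) * t + p * q * t := by noncomm_ring
      _ = p + p * q * t := by rw [ht]
  rw [ht', mul_add, hp.eq, ← mul_assoc, ← mul_assoc, hp.eq]

theorem mul_one_sub_mul_eq_self_of_one_sub_mul_mul_eq (hp : IsIdempotentElem p)
    (hu : IsUnit (1 - p * q)) (ht : (1 - p * q) * t = p) : t * (1 - q) * t = t := by
  have hpt := mul_eq_self_of_one_sub_mul_mul_eq hp ht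
  refine hu.mul_left_cancel ?_
  calc (1 - p * q) * (t * (1 - q) * t) = (1 - p * q) * t * (1 - q) * t := by noncomm_ring
    _ = p * t - p * q * t := by rw [ht]; noncomm_ring
    _ = (1 - p * q) * t := by rw [hpt]; noncomm_ring

variable [StarRing R]

theorem isSelfAdjoint_of_one_sub_mul_mul_eq (hp : IsSelfAdjoint p) (hq : IsSelfAdjoint q)
    (hu : IsUnit (1 - p * q)) (ht : (1 - p * q) * t = p) : IsSelfAdjoint t := by
  have ht_right : t * (1 - q * p) = p :=
    hu.mul_left_cancel <| by
      rw [← mul_assoc, ht]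
      noncomm_ring
  have hstar : (1 - p * q) * star t = p := by
    simpa [star_sub, star_mul, hp.star_eq, hq.star_eq] using congrArg star ht_right
  exact hu.mul_left_cancel (hstar.trans ht.symm)

theorem IsStarProjection.mul_mul_of_mul_mul_eq_self {e : R} (he : IsStarProjection e)
    (ht : IsSelfAdjoint t) (hete : t * e * t = t) : IsStarProjection (e * t * e) where
  isIdempotentElem := by
    calc e * t * e * (e * t * e) = e * (t * (e * e) * t) * e := by noncomm_ring
      _ = e * t * e := by rw [he.isIdempotentElem.eq, hete]
  isSelfAdjoint := by
    simp only [IsSelfAdjoint, star_mul, he.isSelfAdjoint.star_eq, ht.star_eq, mul_assoc]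

theorem isStarProjection_one_sub_mul_mul_one_sub (hp : IsStarProjection p)
    (hq : IsStarProjection q) (hu : IsUnit (1 - p * q)) (ht : (1 - p * q) * t = p) :
    IsStarProjection ((1 - q) * t * (1 - q)) :=
  hq.one_sub.mul_mul_of_mul_mul_eq_self
    (isSelfAdjoint_of_one_sub_mul_mul_eq hp.isSelfAdjoint hq.isSelfAdjoint hu ht)
    (mul_one_sub_mul_eq_self_of_one_sub_mul_mul_eq hp.isIdempotentElem hu ht)

end Compression

theorem Matrix.isStarProjection_iff_transpose {n : Type*} [Fintype n] [DecidableEq n]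
    {A : Matrix n n ℝ} :
    IsStarProjection A ↔ Aᵀ = A ∧ A * A = A := by
  rw [isStarProjection_iff, IsSelfAdjoint, star_eq_conjTranspose,
    conjTranspose_eq_transpose_of_trivial, IsIdempotentElem, and_comm]

open scoped Matrix.Norms.L2Operator in
/-- (P_F + Δ_e)(I − P_{E∖{e}}) is an orthogonal projection matrix. -/
theorem stmt_18 {n : ℕ} (P Q : Matrix (Fin n) (Fin n) ℝ)
    (hPsymm : Pᵀ = P) (hPidem : P * P = P)
    (hQsymm : Qᵀ = Q) (hQidem : Q * Q = Q)
    (hnorm : specNorm (P * Q) < 1) :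
    let Δ := (1 - Q) * (∑' m : ℕ, (P * Q)^(m+1) * P) - Q * P
    let M := (P + Δ) * (1 - Q)
    Mᵀ = M ∧ M * M = M := by
  intro Δ M
  -- `specNorm` is definitionally the L2 operator norm
  have hx : ‖P * Q‖ < 1 := hnorm
  set t := P + ∑' m : ℕ, (P * Q) ^ (m + 1) * P with ht_def
  have ht : (1 - P * Q) * t = P := by
    rw [ht_def, add_tsum_pow_succ_mul hx, one_sub_mul_tsum_pow_mul hx]
  have hM : M = (1 - Q) * t * (1 - Q) := by
    simp only [M, Δ, ht_def]
    noncomm_ring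
  rw [← isStarProjection_iff_transpose, hM]
  exact isStarProjection_one_sub_mul_mul_one_sub
    (isStarProjection_iff_transpose.mpr ⟨hPsymm, hPidem⟩)
    (isStarProjection_iff_transpose.mpr ⟨hQsymm, hQidem⟩)
    (isUnit_one_sub_of_norm_lt_one hx) ht
end
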